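/- Let n, k, m : ℕ with nk = 2m (so that at least one of n and k is even). If I ∈ Q_n(k,m) satisfies D(I) = 0, then also Δ(I) = 0; that is, every semi-invariant of a binary n-form of degree k and weight nk/2 is an invariant. -/

import Mathlib

open MvPolynomial

/-- The operator `D(I) = Σ_{i=1}^{n} i · a_{i-1} · ∂I/∂a_i`. -/
noncomputable def Dop (n : ℕ) :
    MvPolynomial (Fin (n+1)) ℚ →ₗ[ℚ] MvPolynomial (Fin (n+1)) ℚ :=
  ∑ i : Fin n, ((i : ℚ) + 1) •
    ((LinearMap.mulLeft ℚ (X i.castSucc)).comp (pderiv i.succ).toLinearMap)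

/-- The operator `Δ(I) = Σ_{i=0}^{n-1} (n-i) · a_{i+1} · ∂I/∂a_i`. -/
noncomputable def Δop (n : ℕ) :
    MvPolynomial (Fin (n+1)) ℚ →ₗ[ℚ] MvPolynomial (Fin (n+1)) ℚ :=
  ∑ i : Fin n, ((n : ℚ) - (i : ℚ)) •
    ((LinearMap.mulLeft ℚ (X i.succ)).comp (pderiv i.castSucc).toLinearMap)

/-- `Q_n(k,m)`: span of monomials of degree `k` and weight `m`. -/
noncomputable def Qspace (n k m : ℕ) : Submodule ℚ (MvPolynomial (Fin (n+1)) ℚ) :=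
  Submodule.span ℚ { p | ∃ ν : Fin (n+1) →₀ ℕ,
    (∑ i : Fin (n+1), ν i) = k ∧ (∑ i : Fin (n+1), (i : ℕ) * ν i) = m ∧ p = monomial ν (1 : ℚ) }

/-- `S_n(k,m)`: semi-invariants of degree `k` and weight `m`. -/
noncomputable def Sspace (n k m : ℕ) : Submodule ℚ (MvPolynomial (Fin (n+1)) ℚ) :=
  Qspace n k m ⊓ LinearMap.ker (Dop n)

/-- `p(k,n,m)`: number of partitions of `m` in a `k × n` rectangle. -/
def pRect (k n m : ℕ) : ℕ :=
  (Finset.univ.filter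
    (fun P : Nat.Partition m => Multiset.card P.parts ≤ k ∧ ∀ x ∈ P.parts, x ≤ n)).card

/-- Coefficient embedding `ℚ[a] → ℚ[z][a]`. -/
noncomputable def ιmap (n : ℕ) :
    MvPolynomial (Fin (n+1)) ℚ →+* MvPolynomial (Fin (n+1)) (Polynomial ℚ) :=
  MvPolynomial.map (Polynomial.C)

/-- The shear substitution `a_i ↦ a_i' = Σ_{j=0}^{i} C(i,j) a_{i-j} z^j`. -/
noncomputable def φmap (n : ℕ) :
    MvPolynomial (Fin (n+1)) ℚ →ₐ[ℚ] MvPolynomial (Fin (n+1)) (Polynomial ℚ) :=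
  aeval (fun i : Fin (n+1) => ∑ j ∈ Finset.range ((i : ℕ) + 1),
    (C ((Nat.choose (i : ℕ) j : Polynomial ℚ) * Polynomial.X ^ j)) *
      X (⟨(i : ℕ) - j, Nat.lt_of_le_of_lt (Nat.sub_le _ _) i.isLt⟩ : Fin (n+1)))

/-- The vertical shear substitution `a_i ↦ a_i'' = Σ_{j=0}^{n-i} C(n-i,j) a_{i+j} z^j`. -/
noncomputable def ψmap (n : ℕ) :
    MvPolynomial (Fin (n+1)) ℚ →ₐ[ℚ] MvPolynomial (Fin (n+1)) (Polynomial ℚ) :=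
  aeval (fun i : Fin (n+1) => ∑ j ∈ (Finset.range (n - (i : ℕ) + 1)).attach,
    (C ((Nat.choose (n - (i : ℕ)) j.1 : Polynomial ℚ) * Polynomial.X ^ j.1)) *
      X (⟨(i : ℕ) + j.1, by
        have h1 := Finset.mem_range.mp j.2
        have h2 := i.isLt
        omega⟩ : Fin (n+1)))

/-- The weighted total degree of `I`: max of `Σ_i i·ν_i` over monomials of `I`. -/
def wdeg (n : ℕ) (I : MvPolynomial (Fin (n+1)) ℚ) : ℕ :=
  I.support.sup (fun ν => ∑ i : Fin (n+1), (i : ℕ) * ν i)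

/-!
On `Q_n(k, w)` the commutator `[D, Δ] = Σ_j (n - 2j) a_j ∂/∂a_j` acts, by Euler's identities for
degree and weight, as the scalar `nk - 2w`, while `Δ` maps `Q_n(k, w)` into `Q_n(k, w + 1)`, which
is zero once `w > nk`. So `D`, `Δ` behave like the raising and lowering operators of `sl₂`: for a
semi-invariant `I` of weight `m = nk/2` one gets `D (Δ^(t+1) I) = -t(t+1) Δ^t I`, and since
`Δ^(m+1) I = 0`, descending induction on `t ≥ 1` gives `Δ^t I = 0`, in particular `Δ I = 0`.
-/

section LoweringOperator

variable {K V : Type*} [Field K] [AddCommGroup V] [Module K V] {E F : Module.End K V} {v : V}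

theorem apply_pow_succ_apply_of_lie_apply_pow {μ : K} (hE : E v = 0)
    (hH : ∀ t : ℕ, ⁅E, F⁆ ((F ^ t) v) = (μ - 2 * t) • (F ^ t) v) (t : ℕ) :
    E ((F ^ (t + 1)) v) = ((t + 1) * (μ - t)) • (F ^ t) v := by
  have hcomm : ∀ s : ℕ, E ((F ^ (s + 1)) v) = F (E ((F ^ s) v)) + (μ - 2 * s) • (F ^ s) v := by
    intro s
    rw [← hH s, Ring.lie_def, pow_succ', Module.End.mul_apply]
    simp
  induction t with
  | zero => simpa [hE] using hcomm 0
  | succ t ih =>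
    rw [hcomm, ih, map_smul, ← Module.End.mul_apply, ← pow_succ', ← add_smul]
    congr 1
    push_cast
    ring

theorem pow_succ_apply_eq_zero_of_lie_apply_pow [CharZero K] {ℓ N : ℕ} (hE : E v = 0)
    (hH : ∀ t : ℕ, ⁅E, F⁆ ((F ^ t) v) = ((ℓ : K) - 2 * t) • (F ^ t) v)
    (hN : (F ^ N) v = 0) : (F ^ (ℓ + 1)) v = 0 := by
  suffices descend : ∀ j : ℕ, (F ^ (ℓ + 1 + j)) v = 0 → (F ^ (ℓ + 1)) v = 0 from
    descend N (by rw [pow_add, Module.End.mul_apply, hN, map_zero])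
  intro j
  induction j with
  | zero => exact id
  | succ j ih =>
    intro hj
    have key := apply_pow_succ_apply_of_lie_apply_pow hE hH (ℓ + 1 + j)
    rw [← add_assoc] at hj
    rw [hj, map_zero, eq_comm, smul_eq_zero] at key
    refine ih (key.resolve_left ?_)
    have : ((ℓ : K) - (ℓ + 1 + j : ℕ)) = -((j : K) + 1) := by push_cast; ring
    rw [this]
    exact mul_ne_zero (Nat.cast_add_one_ne_zero _) (neg_ne_zero.mpr (Nat.cast_add_one_ne_zero _))

end LoweringOperator

namespace MvPolynomial

variable {R σ : Type*} [CommRing R]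

theorem pderiv_pderiv_comm (i j : σ) (p : MvPolynomial σ R) :
    pderiv i (pderiv j p) = pderiv j (pderiv i p) := by
  classical
  have h : ⁅pderiv i, pderiv j⁆ = (0 : Derivation R (MvPolynomial σ R) (MvPolynomial σ R)) :=
    derivation_ext fun k => by
      rw [Derivation.commutator_apply]
      simp only [pderiv_X, Pi.single_apply]
      split_ifs <;> simp
  have := DFunLike.congr_fun h p
  rwa [Derivation.commutator_apply, Derivation.zero_apply, sub_eq_zero] at this

variable (R) in
noncomputable def polarization (a b : σ) : Module.End R (MvPolynomial σ R) :=
  (LinearMap.mulLeft R (X a)).comp (pderiv b).toLinearMap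

theorem polarization_apply (a b : σ) (p : MvPolynomial σ R) :
    polarization R a b p = X a * pderiv b p := rfl

theorem lie_polarization_polarization [DecidableEq σ] (a b c d : σ) :
    ⁅polarization R a b, polarization R c d⁆ =
      (if c = b then polarization R a d else 0) - (if a = d then polarization R c b else 0) := by
  refine LinearMap.ext fun p => ?_
  simp only [Ring.lie_def, LinearMap.sub_apply, Module.End.mul_apply, polarization_apply,
    Derivation.leibniz, pderiv_X, Pi.single_apply, smul_eq_mul, pderiv_pderiv_comm b d]
  split_ifs <;> simp only [polarization_apply, LinearMap.zero_apply] <;> ring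

theorem polarization_monomial_add_single (a b : σ) (ν : σ →₀ ℕ) (r : R) :
    polarization R a b (monomial (ν + Finsupp.single b 1) r) =
      monomial (ν + Finsupp.single a 1) (r * (ν b + 1)) := by
  classical
  rw [polarization_apply, pderiv_monomial, add_tsub_cancel_right, X, monomial_mul, add_comm]
  simp

end MvPolynomial

section SummationByParts

variable {M : Type*} [AddCommGroup M] [Module ℚ M]

theorem Fin.sum_mul_smul_castSucc_sub_succ (n : ℕ) (f : Fin (n + 1) → M) :
    ∑ i : Fin n, (((i : ℚ) + 1) * ((n : ℚ) - i)) • (f i.castSucc - f i.succ) =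
      ∑ j : Fin (n + 1), ((n : ℚ) - 2 * j) • f j := by
  have hcast : ∑ i : Fin n, (((i : ℚ) + 1) * ((n : ℚ) - i)) • f i.castSucc =
      ∑ j : Fin (n + 1), (((j : ℚ) + 1) * ((n : ℚ) - j)) • f j := by
    simp [Fin.sum_univ_castSucc (n := n)]
  have hsucc : ∑ i : Fin n, (((i : ℚ) + 1) * ((n : ℚ) - i)) • f i.succ =
      ∑ j : Fin (n + 1), ((j : ℚ) * ((n : ℚ) - j + 1)) • f j := by
    rw [Fin.sum_univ_succ]
    simp only [Fin.val_succ, Fin.val_zero, Nat.cast_zero, zero_mul, zero_smul, zero_add]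
    refine Finset.sum_congr rfl fun i _ => ?_
    congr 1
    push_cast
    ring
  rw [Finset.sum_congr rfl fun i _ => smul_sub _ _ _, Finset.sum_sub_distrib, hcast, hsucc,
    ← Finset.sum_sub_distrib]
  refine Finset.sum_congr rfl fun j _ => ?_
  rw [← sub_smul]
  congr 1
  ring

end SummationByParts

section BinaryForms

open Finset

variable {n k w : ℕ}

theorem Dop_eq_sum_polarization :
    Dop n = ∑ i : Fin n, ((i : ℚ) + 1) • polarization ℚ i.castSucc i.succ := rfl

theorem Δop_eq_sum_polarization :
    Δop n = ∑ i : Fin n, ((n : ℚ) - i) • polarization ℚ i.succ i.castSucc := rfl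

theorem lie_Dop_Δop :
    ⁅Dop n, Δop n⁆ = ∑ j : Fin (n + 1), ((n : ℚ) - 2 * j) • polarization ℚ j j := by
  have hbracket : ∀ i j : Fin n,
      ⁅polarization ℚ i.castSucc i.succ, polarization ℚ j.succ j.castSucc⁆ =
        if i = j then polarization ℚ i.castSucc i.castSucc - polarization ℚ i.succ i.succ
        else 0 := by
    intro i j
    rw [lie_polarization_polarization]
    simp only [Fin.succ_inj, Fin.castSucc_inj, eq_comm (a := j)]
    split_ifs <;> simp_all
  have hterm : ∀ i j : Fin n, ∀ c d : ℚ,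
      (c • polarization ℚ i.castSucc i.succ) * (d • polarization ℚ j.succ j.castSucc) -
        (d • polarization ℚ j.succ j.castSucc) * (c • polarization ℚ i.castSucc i.succ) =
      (c * d) • ⁅polarization ℚ i.castSucc i.succ, polarization ℚ j.succ j.castSucc⁆ := by
    intro i j c d
    rw [Ring.lie_def, smul_sub, smul_mul_smul_comm, smul_mul_smul_comm, mul_comm d c]
  rw [Dop_eq_sum_polarization, Δop_eq_sum_polarization,
    ← Fin.sum_mul_smul_castSucc_sub_succ n fun j => polarization ℚ j j, Ring.lie_def,
    sum_mul_sum, sum_mul_sum, sum_comm (s := univ), ← sum_sub_distrib]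
  refine sum_congr rfl fun i _ => ?_
  simp only [← sum_sub_distrib, hterm, hbracket, smul_ite, smul_zero, sum_ite_eq', mem_univ,
    if_true]

theorem sum_val_mul_eq_weight (ν : Fin (n + 1) →₀ ℕ) :
    ∑ i : Fin (n + 1), (i : ℕ) * ν i = ν.weight (fun i : Fin (n + 1) => (i : ℕ)) := by
  simp [Finsupp.weight_eq_sum, mul_comm]

theorem monomial_mem_Qspace {ν : Fin (n + 1) →₀ ℕ} (r : ℚ) (hk : ν.degree = k)
    (hw : ν.weight (fun i : Fin (n + 1) => (i : ℕ)) = w) : monomial ν r ∈ Qspace n k w := by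
  rw [← mul_one r, ← smul_eq_mul, ← smul_monomial]
  exact Submodule.smul_mem _ _ <| Submodule.subset_span
    ⟨ν, by rwa [← Finsupp.degree_eq_sum], by rwa [sum_val_mul_eq_weight], rfl⟩

theorem Qspace_le_homogeneous_inf_weightedHomogeneous :
    Qspace n k w ≤ homogeneousSubmodule (Fin (n + 1)) ℚ k ⊓
      weightedHomogeneousSubmodule ℚ (fun i : Fin (n + 1) => (i : ℕ)) w := by
  refine Submodule.span_le.mpr ?_
  rintro _ ⟨ν, hk, hw, rfl⟩
  exact ⟨isHomogeneous_monomial _ (by rwa [Finsupp.degree_eq_sum]),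
    isWeightedHomogeneous_monomial _ _ _ (by rwa [← sum_val_mul_eq_weight])⟩

theorem lie_Dop_Δop_apply_of_mem_Qspace {p : MvPolynomial (Fin (n + 1)) ℚ}
    (hp : p ∈ Qspace n k w) : ⁅Dop n, Δop n⁆ p = ((n : ℚ) * k - 2 * w) • p := by
  obtain ⟨hk, hw⟩ := Qspace_le_homogeneous_inf_weightedHomogeneous hp
  have euler := hk.sum_X_mul_pderiv
  have weighted_euler := IsWeightedHomogeneous.sum_weight_X_mul_pderiv hw
  simp only [← Nat.cast_smul_eq_nsmul ℚ] at euler weighted_euler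
  rw [lie_Dop_Δop, LinearMap.sum_apply]
  simp only [LinearMap.smul_apply, polarization_apply, sub_smul, sum_sub_distrib, mul_smul]
  rw [← smul_sum, ← smul_sum, euler, weighted_euler]

theorem Δop_mem_Qspace {p : MvPolynomial (Fin (n + 1)) ℚ} (hp : p ∈ Qspace n k w) :
    Δop n p ∈ Qspace n k (w + 1) := by
  refine (Submodule.span_le (p := (Qspace n k (w + 1)).comap (Δop n))).mpr ?_ hp
  rintro _ ⟨ν, hk, hw, rfl⟩
  rw [SetLike.mem_coe, Submodule.mem_comap, Δop_eq_sum_polarization, LinearMap.sum_apply]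
  refine Submodule.sum_mem _ fun i _ => Submodule.smul_mem _ _ ?_
  obtain hν | hν := eq_or_ne (ν i.castSucc) 0
  · simp [polarization_apply, hν]
  obtain ⟨μ, rfl⟩ : ∃ μ, ν = μ + Finsupp.single i.castSucc 1 :=
    ⟨ν - Finsupp.single i.castSucc 1,
      (tsub_add_cancel_of_le (Finsupp.single_le_iff.mpr (Nat.one_le_iff_ne_zero.mpr hν))).symm⟩
  rw [polarization_monomial_add_single]
  refine monomial_mem_Qspace _ ?_ ?_
  · rw [← Finsupp.degree_eq_sum, map_add, Finsupp.degree_single] at hk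
    rw [map_add, Finsupp.degree_single, hk]
  · rw [sum_val_mul_eq_weight, map_add, Finsupp.weight_single] at hw
    rw [map_add, Finsupp.weight_single, ← hw]
    simp only [Fin.val_succ, Fin.val_castSucc, smul_eq_mul, one_mul]
    omega

theorem Δop_pow_mem_Qspace {p : MvPolynomial (Fin (n + 1)) ℚ} (hp : p ∈ Qspace n k w) (t : ℕ) :
    (Δop n ^ t) p ∈ Qspace n k (w + t) := by
  induction t with
  | zero => simpa using hp
  | succ t ih => simpa [pow_succ', ← add_assoc] using Δop_mem_Qspace ih

theorem Qspace_eq_bot (hw : n * k < w) : Qspace n k w = ⊥ := by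
  refine Submodule.span_eq_bot.mpr ?_
  rintro _ ⟨ν, hk, rfl, rfl⟩
  have : ∑ i : Fin (n + 1), (i : ℕ) * ν i ≤ ∑ i : Fin (n + 1), n * ν i :=
    sum_le_sum fun i _ => Nat.mul_le_mul_right _ (Fin.is_le i)
  rw [← mul_sum, hk] at this
  exact absurd this (by omega)

end BinaryForms

/-- every semi-invariant of degree `k` and weight `nk/2` is an invariant. -/
theorem semiInvariant_is_invariant (n k m : ℕ) (h : n * k = 2 * m)
    (I : MvPolynomial (Fin (n+1)) ℚ) (hI : I ∈ Qspace n k m) (hD : Dop n I = 0) :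
    Δop n I = 0 := by
  have hH : ∀ t : ℕ, ⁅Dop n, Δop n⁆ ((Δop n ^ t) I) = (((0 : ℕ) : ℚ) - 2 * t) • (Δop n ^ t) I := by
    intro t
    have hcast : (n : ℚ) * k = 2 * m := by exact_mod_cast h
    rw [lie_Dop_Δop_apply_of_mem_Qspace (Δop_pow_mem_Qspace hI t)]
    congr 1
    push_cast
    linarith
  have hnil : (Δop n ^ (m + 1)) I = 0 := by
    simpa [Qspace_eq_bot (show n * k < m + (m + 1) by omega)] using Δop_pow_mem_Qspace hI (m + 1)
  simpa using pow_succ_apply_eq_zero_of_lie_apply_pow hD hH hnil
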